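/- Consider GCN layers H^{(l+1)} = σ(Ã H^{(l)} W^{(l)}) with H^{(0)} = X and σ applied entrywise. If two nodes i and j are indistinguishable under l iterations of the 1-WL test (with initial colors given by rows of X and edge weights of Ã), then H_i^{(l)} = H_j^{(l)} for every choice of weight matrices W^{(0)}, …, W^{(l-1)}. -/

import Mathlib

/-!
A GCN layer sends row `i` of `H` to `σ (∑ u, Ã i u • H u) W`, a function of the multiset of pairs
`(Ã i u, H u)`. By induction on `l`, the row `H^{(l)} u` is a function of the WL colour `c l u`,
so that row `i` of `H^{(l+1)}` is a function of the multiset `{(Ã i u, c l u)}`, and by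
injectivity of the hash this multiset is determined by `c (l + 1) i`.
-/

/-- GCN layers `H^{(l+1)} = σ(Ã H^{(l)} W^{(l)})` with `H^{(0)} = X`, `σ` entrywise. -/
noncomputable def gcnH {n d : ℕ} (A : Matrix (Fin n) (Fin n) ℝ)
    (X : Matrix (Fin n) (Fin d) ℝ) (σ : ℝ → ℝ)
    (W : ℕ → Matrix (Fin d) (Fin d) ℝ) : ℕ → Matrix (Fin n) (Fin d) ℝ
  | 0 => X
  | l + 1 => (A * gcnH A X σ W l * W l).map σ

theorem Finset.sum_smul_comp_eq_multiset_sum {ι R C M : Type*} [Fintype ι] [AddCommMonoid M]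
    [SMul R M] (a : ι → R) (κ : ι → C) (g : C → M) :
    ∑ u, a u • g (κ u) = ((univ.val.map fun u => (a u, κ u)).map fun p => p.1 • g p.2).sum := by
  rw [Multiset.map_map]
  rfl

theorem Finset.sum_smul_eq_of_map_eq {ι R C M : Type*} [Fintype ι] [AddCommMonoid M] [SMul R M]
    {a b : ι → R} {κ : ι → C} {f : ι → M} (hf : f.FactorsThrough κ)
    (hab : univ.val.map (fun u => (a u, κ u)) = univ.val.map fun u => (b u, κ u)) :
    ∑ u, a u • f u = ∑ u, b u • f u := by
  have hg : ∀ u, Function.extend κ f 0 (κ u) = f u := hf.extend_apply 0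
  simp only [← hg, sum_smul_comp_eq_multiset_sum, hab]

theorem gcnH_succ_apply_eq_of_mul_apply_eq {n d : ℕ} (A : Matrix (Fin n) (Fin n) ℝ)
    (X : Matrix (Fin n) (Fin d) ℝ) (σ : ℝ → ℝ) (W : ℕ → Matrix (Fin d) (Fin d) ℝ) (l : ℕ)
    {i j : Fin n} (h : (A * gcnH A X σ W l) i = (A * gcnH A X σ W l) j) :
    gcnH A X σ W (l + 1) i = gcnH A X σ W (l + 1) j := by
  funext k
  simp only [gcnH, Matrix.map_apply, Matrix.mul_apply_eq_vecMul _ (W l), h]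

theorem gcnH_factorsThrough_color {n d : ℕ} {C : Type*} (A : Matrix (Fin n) (Fin n) ℝ)
    (X : Matrix (Fin n) (Fin d) ℝ) (σ : ℝ → ℝ) (W : ℕ → Matrix (Fin d) (Fin d) ℝ)
    (c : ℕ → Fin n → C) (hc0 : X.FactorsThrough (c 0))
    (hc : ∀ l, (fun i => Finset.univ.val.map fun u => (A i u, c l u)).FactorsThrough (c (l + 1)))
    (l : ℕ) : (gcnH A X σ W l).FactorsThrough (c l) := by
  induction l with
  | zero => exact hc0
  | succ l ih =>
    intro i j hij
    apply gcnH_succ_apply_eq_of_mul_apply_eq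
    simpa only [Matrix.mul_apply_eq_vecMul, Matrix.vecMul_eq_sum] using
      Finset.sum_smul_eq_of_map_eq ih (hc l hij)

/-- If nodes `i, j` are indistinguishable under `l` iterations of the 1-WL test
(injective hash, initial colors determined exactly by the rows of `X`, refinement over the
edge weights of `Ã`), then `H^{(l)}_i = H^{(l)}_j` for every choice of weight matrices. -/
theorem stmt9 {n d : ℕ} {C : Type*}
    (A : Matrix (Fin n) (Fin n) ℝ) (X : Matrix (Fin n) (Fin d) ℝ) (σ : ℝ → ℝ)
    (c : ℕ → Fin n → C)
    (Hash : Multiset (ℝ × C) → C) (hHash : Function.Injective Hash)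
    (hc0 : ∀ i j, c 0 i = c 0 j ↔ X i = X j)
    (hrec : ∀ l i, c (l + 1) i = Hash (Finset.univ.val.map fun u => (A i u, c l u)))
    (l : ℕ) (i j : Fin n) (hij : c l i = c l j) :
    ∀ W : ℕ → Matrix (Fin d) (Fin d) ℝ, gcnH A X σ W l i = gcnH A X σ W l j := by
  intro W
  refine gcnH_factorsThrough_color A X σ W c (fun i j => (hc0 i j).mp) ?_ l hij
  exact fun l i j h => hHash (by rw [← hrec, ← hrec, h])
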